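/- arXiv:2104.11803 — 5 statements merged into one kernel-verified Lean document; each statement's English description precedes it below -/
import Mathlib

section
/- Let M ∈ ℝ^{s×s} be symmetric positive definite, ε > 0, K, L ∈ ℝ^{m×s}, let b̲ ≤ b̄ be real numbers, and let α₁, …, α_r ∈ ℝ^{1×m} be row vectors. Then the constraints αᵢ(K + bL)x ≤ 1 for all i ∈ {1, …, r} hold for every x ∈ ℝ^s with xᵀMx ≤ ε² and every b ∈ [b̲, b̄] ∪ {0} if and only if for every i ∈ {1, …, r}: αᵢ K M⁻¹ Kᵀ αᵢᵀ ≤ 1/ε², αᵢ (K + b̲L) M⁻¹ (K + b̲L)ᵀ αᵢᵀ ≤ 1/ε², and αᵢ (K + b̄L) M⁻¹ (K + b̄L)ᵀ αᵢᵀ ≤ 1/ε². -/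
/-!
By Cauchy–Schwarz for the inner product `⟪x, y⟫ = xᵀ M y`, the support function of the ellipsoid
`xᵀ M x ≤ ε²` is `v ↦ ε √(vᵀ M⁻¹ v)`, attained at a multiple of `M⁻¹ v`. Applied to
`v = (K + b L)ᵀ αᵢᵀ`, this turns each constraint into the quadratic condition at `b`. The constraint
is affine in `b`, so on `[b̲, b̄]` it holds as soon as it holds at both endpoints.
-/

open Matrix

namespace Matrix

variable {n m : Type*} [Fintype n]

lemma IsHermitian.dotProduct_mulVec_comm {M : Matrix n n ℝ} (hM : M.IsHermitian)
    (x y : n → ℝ) :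
    x ⬝ᵥ M *ᵥ y = y ⬝ᵥ M *ᵥ x := by
  rw [dotProduct_mulVec, ← mulVec_transpose, (isHermitian_iff_isSymm.mp hM).eq, dotProduct_comm]

lemma PosSemidef.dotProduct_mulVec_sq_le {M : Matrix n n ℝ} (hM : M.PosSemidef) (x y : n → ℝ) :
    (x ⬝ᵥ M *ᵥ y) ^ 2 ≤ (x ⬝ᵥ M *ᵥ x) * (y ⬝ᵥ M *ᵥ y) := by
  have hyx : y ⬝ᵥ M *ᵥ x = x ⬝ᵥ M *ᵥ y := hM.isHermitian.dotProduct_mulVec_comm y x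
  -- the quadratic `t ↦ (t x + y)ᵀ M (t x + y)` is nonnegative, so its discriminant is not positive
  have hdisc := discrim_le_zero (a := x ⬝ᵥ M *ᵥ x) (b := 2 * (x ⬝ᵥ M *ᵥ y))
    (c := y ⬝ᵥ M *ᵥ y) fun t => by
      have := hM.dotProduct_mulVec_nonneg (t • x + y)
      simp only [star_trivial, mulVec_add, mulVec_smul, dotProduct_add, add_dotProduct,
        dotProduct_smul, smul_dotProduct, smul_eq_mul, hyx] at this
      linarith
  rw [discrim] at hdisc
  linarith

variable [DecidableEq n] {M : Matrix n n ℝ}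

lemma PosDef.mulVec_inv_mulVec (hM : M.PosDef) (v : n → ℝ) : M *ᵥ (M⁻¹ *ᵥ v) = v := by
  rw [mulVec_mulVec, mul_nonsing_inv _ ((isUnit_iff_isUnit_det M).mp hM.isUnit), one_mulVec]

lemma PosDef.dotProduct_sq_le_mul (hM : M.PosDef) (v x : n → ℝ) :
    (v ⬝ᵥ x) ^ 2 ≤ (v ⬝ᵥ M⁻¹ *ᵥ v) * (x ⬝ᵥ M *ᵥ x) := by
  set w := M⁻¹ *ᵥ v
  have hv : M *ᵥ w = v := hM.mulVec_inv_mulVec v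
  have hww : w ⬝ᵥ M *ᵥ w = v ⬝ᵥ w := by rw [hv, dotProduct_comm]
  have hwx : w ⬝ᵥ M *ᵥ x = v ⬝ᵥ x := by
    rw [hM.isHermitian.dotProduct_mulVec_comm, hv, dotProduct_comm]
  simpa only [hww, hwx] using hM.posSemidef.dotProduct_mulVec_sq_le w x

theorem PosDef.forall_dotProduct_le_one_iff (hM : M.PosDef) {ε : ℝ} (hε : 0 < ε) (v : n → ℝ) :
    (∀ x, x ⬝ᵥ M *ᵥ x ≤ ε ^ 2 → v ⬝ᵥ x ≤ 1) ↔ v ⬝ᵥ M⁻¹ *ᵥ v ≤ 1 / ε ^ 2 := by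
  have hc : 0 ≤ v ⬝ᵥ M⁻¹ *ᵥ v := by simpa using hM.inv.posSemidef.dotProduct_mulVec_nonneg v
  constructor
  · intro h
    rcases hc.eq_or_lt with hc0 | hcpos
    · rw [← hc0]; positivity
    obtain ⟨r, hr, hrc⟩ : ∃ r > 0, v ⬝ᵥ M⁻¹ *ᵥ v = r ^ 2 :=
      ⟨_, Real.sqrt_pos.mpr hcpos, (Real.sq_sqrt hc).symm⟩
    -- test the constraint at the boundary point of the ellipsoid in the direction `M⁻¹ v`
    have hw : M⁻¹ *ᵥ v ⬝ᵥ M *ᵥ (M⁻¹ *ᵥ v) = r ^ 2 := by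
      rw [hM.mulVec_inv_mulVec, dotProduct_comm, hrc]
    have hx : (ε / r) • (M⁻¹ *ᵥ v) ⬝ᵥ M *ᵥ ((ε / r) • (M⁻¹ *ᵥ v)) = ε ^ 2 := by
      simp only [mulVec_smul, dotProduct_smul, smul_dotProduct, hw, smul_eq_mul]
      field_simp
    have hεr : ε * r ≤ 1 := by
      have := h _ hx.le
      rw [dotProduct_smul, hrc, smul_eq_mul] at this
      convert this using 1
      field_simp
    rw [hrc, le_div_iff₀ (by positivity)]
    nlinarith [mul_pos hε hr]
  · intro h x hx
    have hcx : (v ⬝ᵥ M⁻¹ *ᵥ v) * (x ⬝ᵥ M *ᵥ x) ≤ 1 / ε ^ 2 * ε ^ 2 :=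
      mul_le_mul h hx (by simpa using hM.posSemidef.dotProduct_mulVec_nonneg x) (by positivity)
    have hsq : (v ⬝ᵥ x) ^ 2 ≤ 1 := by
      calc (v ⬝ᵥ x) ^ 2 ≤ (v ⬝ᵥ M⁻¹ *ᵥ v) * (x ⬝ᵥ M *ᵥ x) := hM.dotProduct_sq_le_mul v x
        _ ≤ 1 := by rwa [one_div_mul_cancel (by positivity)] at hcx
    exact le_of_abs_le (sq_le_one_iff_abs_le_one _ |>.mp hsq)

theorem PosDef.forall_dotProduct_mulVec_le_one_iff (hM : M.PosDef) {ε : ℝ} (hε : 0 < ε)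
    [Fintype m] (A : Matrix m n ℝ) (u : m → ℝ) :
    (∀ x, x ⬝ᵥ M *ᵥ x ≤ ε ^ 2 → u ⬝ᵥ A *ᵥ x ≤ 1) ↔ u ⬝ᵥ (A * M⁻¹ * Aᵀ) *ᵥ u ≤ 1 / ε ^ 2 := by
  have hdual : ∀ x, u ⬝ᵥ A *ᵥ x = Aᵀ *ᵥ u ⬝ᵥ x := fun x => by
    rw [dotProduct_mulVec, mulVec_transpose]
  simp only [hdual, ← mulVec_mulVec]
  exact hM.forall_dotProduct_le_one_iff hε _

end Matrix

lemma add_mul_le_of_mem_Icc {a c k bl bu b : ℝ} (hb : b ∈ Set.Icc bl bu)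
    (hl : a + bl * c ≤ k) (hu : a + bu * c ≤ k) : a + b * c ≤ k := by
  rcases le_total 0 c with hc | hc <;> nlinarith [hb.1, hb.2]

/-- **Theorem 4.2 of the paper.** The constraints `αᵢ (K + b L) x ≤ 1` hold for
every `x` in the ellipsoid `{x | xᵀ M x ≤ ε²}` and every `b ∈ [b̲, b̄] ∪ {0}` if and only if the
three quadratic conditions `αᵢ (K + bL) M⁻¹ (K + bL)ᵀ αᵢᵀ ≤ 1/ε²` hold for `b ∈ {0, b̲, b̄}`. -/
theorem constraints_on_ellipsoid_iff
    {s m r : ℕ} (M : Matrix (Fin s) (Fin s) ℝ) (hM : M.PosDef)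
    (ε : ℝ) (hε : 0 < ε) (K L : Matrix (Fin m) (Fin s) ℝ)
    (bl bu : ℝ) (hb : bl ≤ bu) (α : Fin r → (Fin m → ℝ)) :
    (∀ i : Fin r, ∀ b ∈ Set.Icc bl bu ∪ {(0 : ℝ)}, ∀ x : Fin s → ℝ,
        x ⬝ᵥ (M *ᵥ x) ≤ ε ^ 2 → (α i) ⬝ᵥ ((K + b • L) *ᵥ x) ≤ 1) ↔
    (∀ i : Fin r,
        (α i) ⬝ᵥ ((K * M⁻¹ * Kᵀ) *ᵥ (α i)) ≤ 1 / ε ^ 2 ∧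
        (α i) ⬝ᵥ (((K + bl • L) * M⁻¹ * (K + bl • L)ᵀ) *ᵥ (α i)) ≤ 1 / ε ^ 2 ∧
        (α i) ⬝ᵥ (((K + bu • L) * M⁻¹ * (K + bu • L)ᵀ) *ᵥ (α i)) ≤ 1 / ε ^ 2) := by
  simp only [← hM.forall_dotProduct_mulVec_le_one_iff hε]
  constructor
  · intro h i
    refine ⟨fun x hx => ?_, h i bl (Or.inl ⟨le_rfl, hb⟩), h i bu (Or.inl ⟨hb, le_rfl⟩)⟩
    simpa using h i 0 (Or.inr rfl) x hx
  · rintro h i b (hbI | rfl) x hx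
    · have hlin : ∀ c : ℝ, α i ⬝ᵥ (K + c • L) *ᵥ x = α i ⬝ᵥ K *ᵥ x + c * (α i ⬝ᵥ L *ᵥ x) :=
        fun c => by rw [add_mulVec, smul_mulVec, dotProduct_add, dotProduct_smul, smul_eq_mul]
      rw [hlin]
      exact add_mul_le_of_mem_Icc hbI (hlin bl ▸ (h i).2.1 x hx) (hlin bu ▸ (h i).2.2 x hx)
    · simpa using (h i).1 x hx
end

section
/- Let A ∈ ℝ^{s×s}, B ∈ ℝ^{s×m}, E ∈ ℝ^{s×1}, F ∈ ℝ^{1×s}, K, L ∈ ℝ^{m×s}, let M ∈ ℝ^{s×s} be symmetric positive semidefinite, let κ ∈ ℝ, and let b̲ ≤ b̄ be real numbers. For b ∈ ℝ set A_b := A + BK + b(BL + EF). If A_0ᵀ M A_0 ⪯ κM, A_{b̲}ᵀ M A_{b̲} ⪯ κM, and A_{b̄}ᵀ M A_{b̄} ⪯ κM, then A_bᵀ M A_b ⪯ κM for every b ∈ [b̲, b̄] ∪ {0}. -/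
/-!
As a function of `b`, `κ M - A_bᵀ M A_b` is a matrix quadratic whose leading coefficient
`-(BL + EF)ᵀ M (BL + EF)` is negative semidefinite. Hence for `b̲ ≤ b ≤ b̄` it equals the convex
combination of its values at `b̲` and `b̄` plus `(b̄ - b)(b - b̲)` times the positive semidefinite
matrix `(BL + EF)ᵀ M (BL + EF)`, and is therefore positive semidefinite.
-/

open Matrix

/-- The matrix `A_b = A + B K + b (B L + E F)`. -/
noncomputable def Amat {s m : ℕ}
    (A : Matrix (Fin s) (Fin s) ℝ) (B : Matrix (Fin s) (Fin m) ℝ)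
    (E : Matrix (Fin s) (Fin 1) ℝ) (F : Matrix (Fin 1) (Fin s) ℝ)
    (K L : Matrix (Fin m) (Fin s) ℝ) (b : ℝ) : Matrix (Fin s) (Fin s) ℝ :=
  A + B * K + b • (B * L + E * F)

namespace Matrix

variable {m n : Type*} [Fintype m]

theorem transpose_mul_mul_add_smul {R : Type*} [CommRing R] (P Q : Matrix m n R)
    (M : Matrix m m R) (b : R) :
    (P + b • Q)ᵀ * M * (P + b • Q) =
      Pᵀ * M * P + b • (Pᵀ * M * Q + Qᵀ * M * P) + b ^ 2 • (Qᵀ * M * Q) := by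
  simp only [transpose_add, transpose_smul, Matrix.add_mul, Matrix.mul_add, Matrix.smul_mul,
    Matrix.mul_smul]
  module

theorem PosSemidef.add_smul_sub_sq_smul_of_mem_Icc {C D G : Matrix n n ℝ} (hG : G.PosSemidef)
    {x y z : ℝ} (hxz : x ≤ z) (hzy : z ≤ y)
    (hx : (C + x • D - x ^ 2 • G).PosSemidef) (hy : (C + y • D - y ^ 2 • G).PosSemidef) :
    (C + z • D - z ^ 2 • G).PosSemidef := by
  rcases hxz.eq_or_lt with rfl | hxz'
  · exact hx
  have hxy : 0 < y - x := by linarith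
  have hyz : 0 ≤ y - z := sub_nonneg.2 hzy
  have hzx : 0 ≤ z - x := sub_nonneg.2 hxz
  have interpolation : C + z • D - z ^ 2 • G =
      ((y - z) / (y - x)) • (C + x • D - x ^ 2 • G) +
        ((z - x) / (y - x)) • (C + y • D - y ^ 2 • G) + ((y - z) * (z - x)) • G := by
    match_scalars <;> field_simp <;> ring
  rw [interpolation]
  exact ((hx.smul (div_nonneg hyz hxy.le)).add (hy.smul (div_nonneg hzx hxy.le))).add
    (hG.smul (mul_nonneg hyz hzx))

theorem PosSemidef.smul_sub_transpose_mul_mul_of_mem_Icc {M : Matrix m m ℝ} (hM : M.PosSemidef)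
    {P Q : Matrix m m ℝ} {κ x y z : ℝ} (hxz : x ≤ z) (hzy : z ≤ y)
    (hx : (κ • M - (P + x • Q)ᵀ * M * (P + x • Q)).PosSemidef)
    (hy : (κ • M - (P + y • Q)ᵀ * M * (P + y • Q)).PosSemidef) :
    (κ • M - (P + z • Q)ᵀ * M * (P + z • Q)).PosSemidef := by
  have hG : (Qᵀ * M * Q).PosSemidef := by
    simpa using hM.conjTranspose_mul_mul_same Q
  have expand (b : ℝ) : κ • M - (P + b • Q)ᵀ * M * (P + b • Q) =
      (κ • M - Pᵀ * M * P) + b • -(Pᵀ * M * Q + Qᵀ * M * P) - b ^ 2 • (Qᵀ * M * Q) := by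
    rw [transpose_mul_mul_add_smul]; module
  rw [expand] at hx hy ⊢
  exact hG.add_smul_sub_sq_smul_of_mem_Icc hxz hzy hx hy

end Matrix

theorem Ab_quadratic_contraction_interval_general
    {s m : ℕ} (A : Matrix (Fin s) (Fin s) ℝ) (B : Matrix (Fin s) (Fin m) ℝ)
    (E : Matrix (Fin s) (Fin 1) ℝ) (F : Matrix (Fin 1) (Fin s) ℝ)
    (K L : Matrix (Fin m) (Fin s) ℝ)
    (M : Matrix (Fin s) (Fin s) ℝ) (hM : M.PosSemidef)
    (κ bl bu : ℝ)
    (h0 : (κ • M - (Amat A B E F K L 0)ᵀ * M * (Amat A B E F K L 0)).PosSemidef)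
    (hl : (κ • M - (Amat A B E F K L bl)ᵀ * M * (Amat A B E F K L bl)).PosSemidef)
    (hu : (κ • M - (Amat A B E F K L bu)ᵀ * M * (Amat A B E F K L bu)).PosSemidef) :
    ∀ b ∈ Set.Icc bl bu ∪ {(0 : ℝ)},
      (κ • M - (Amat A B E F K L b)ᵀ * M * (Amat A B E F K L b)).PosSemidef := by
  rintro b (⟨hbl, hbu⟩ | rfl)
  · exact hM.smul_sub_transpose_mul_mul_of_mem_Icc hbl hbu hl hu
  · exact h0

/-- If `A_bᵀ M A_b ⪯ κ M` for `b ∈ {0, b̲, b̄}`, then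
`A_bᵀ M A_b ⪯ κ M` for every `b ∈ [b̲, b̄] ∪ {0}`. -/
theorem Ab_quadratic_contraction_interval
    {s m : ℕ} (A : Matrix (Fin s) (Fin s) ℝ) (B : Matrix (Fin s) (Fin m) ℝ)
    (E : Matrix (Fin s) (Fin 1) ℝ) (F : Matrix (Fin 1) (Fin s) ℝ)
    (K L : Matrix (Fin m) (Fin s) ℝ)
    (M : Matrix (Fin s) (Fin s) ℝ) (hM : M.PosSemidef)
    (κ bl bu : ℝ) (hb : bl ≤ bu)
    (h0 : (κ • M - (Amat A B E F K L 0)ᵀ * M * (Amat A B E F K L 0)).PosSemidef)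
    (hl : (κ • M - (Amat A B E F K L bl)ᵀ * M * (Amat A B E F K L bl)).PosSemidef)
    (hu : (κ • M - (Amat A B E F K L bu)ᵀ * M * (Amat A B E F K L bu)).PosSemidef) :
    ∀ b ∈ Set.Icc bl bu ∪ {(0 : ℝ)},
      (κ • M - (Amat A B E F K L b)ᵀ * M * (Amat A B E F K L b)).PosSemidef :=
  Ab_quadratic_contraction_interval_general A B E F K L M hM κ bl bu h0 hl hu
end

section
/- Let M ∈ ℝ^{s×s} be symmetric positive definite, A ∈ ℝ^{s×s}, ε > 0, and 0 ≤ γ ≤ ε. Then ‖Ax‖_M ≤ ε − γ holds for every x ∈ ℝ^s with ‖x‖_M ≤ ε if and only if there exists κ with 0 ≤ κ ≤ (ε − γ)²/ε² such that Aᵀ M A ⪯ κM. -/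
/-!
Both sides are statements about the quadratic forms `q(x) = xᵀ M x` and `q(A x)`. Since both are
homogeneous of degree two and `q` is positive definite, rescaling `x` to the level set `q = ε²`
shows that the implication `q(x) ≤ ε² → q(A x) ≤ (ε − γ)²` holds for all `x` exactly when
`q(A x) ≤ ((ε − γ)/ε)² q(x)` for all `x`, i.e. when `Aᵀ M A ⪯ ((ε − γ)/ε)² M`; any smaller
`κ ≥ 0` then also works because `q ≥ 0`.
-/

open Matrix

namespace Matrix

variable {n R : Type*} [Fintype n]

theorem dotProduct_mulVec_transpose_mul_mul [CommSemiring R] (M A : Matrix n n R) (x : n → R) :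
    x ⬝ᵥ ((Aᵀ * M * A) *ᵥ x) = (A *ᵥ x) ⬝ᵥ (M *ᵥ (A *ᵥ x)) := by
  rw [← mulVec_mulVec, ← mulVec_mulVec, dotProduct_mulVec, vecMul_transpose]

theorem posSemidef_smul_sub_transpose_mul_mul_iff [CommRing R] [PartialOrder R]
    [IsOrderedRing R] [StarRing R] [TrivialStar R] {M : Matrix n n R} (hM : M.IsHermitian)
    (A : Matrix n n R) (κ : R) :
    (κ • M - Aᵀ * M * A).PosSemidef ↔
      ∀ x, (A *ᵥ x) ⬝ᵥ (M *ᵥ (A *ᵥ x)) ≤ κ * (x ⬝ᵥ (M *ᵥ x)) := by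
  have hAMA : (Aᵀ * M * A).IsHermitian := by
    simpa only [conjTranspose_eq_transpose_of_trivial] using isHermitian_conjTranspose_mul_mul A hM
  have hκM : (κ • M).IsHermitian := by
    rw [IsHermitian, conjTranspose_smul, hM, star_trivial]
  rw [posSemidef_iff_dotProduct_mulVec, and_iff_right (hκM.sub hAMA)]
  simp only [star_trivial, sub_mulVec, dotProduct_sub, sub_nonneg, smul_mulVec, dotProduct_smul,
    smul_eq_mul, dotProduct_mulVec_transpose_mul_mul]

theorem toQuadraticForm'_apply [CommRing R] [DecidableEq n] (M : Matrix n n R) (x : n → R) :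
    M.toQuadraticForm' x = x ⬝ᵥ (M *ᵥ x) :=
  toLinearMap₂'_apply' M x x

end Matrix

theorem QuadraticMap.forall_le_sq_imp_le_sq_iff {V : Type*} [AddCommGroup V] [Module ℝ V]
    {Q P : QuadraticForm ℝ V} (hQ : Q.PosDef) {ε : ℝ} (hε : 0 < ε) (δ : ℝ) :
    (∀ x, Q x ≤ ε ^ 2 → P x ≤ δ ^ 2) ↔ ∀ x, P x ≤ (δ / ε) ^ 2 * Q x := by
  constructor
  · intro h x
    rcases eq_or_ne x 0 with rfl | hx
    · simp
    have hQx : 0 < Q x := hQ x hx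
    obtain ⟨c, hc, hcQ⟩ : ∃ c : ℝ, 0 < c ∧ c ^ 2 * Q x = ε ^ 2 :=
      ⟨ε / √(Q x), div_pos hε (Real.sqrt_pos.2 hQx), by
        rw [div_pow, Real.sq_sqrt hQx.le, div_mul_cancel₀ _ hQx.ne']⟩
    have hPc : c ^ 2 * P x ≤ δ ^ 2 := by
      simpa only [QuadraticMap.map_smul, smul_eq_mul, ← pow_two] using
        h (c • x) (by rw [QuadraticMap.map_smul, smul_eq_mul, ← pow_two, hcQ])
    calc P x ≤ δ ^ 2 / c ^ 2 := by rw [le_div_iff₀ (by positivity)]; linarith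
      _ = (δ / ε) ^ 2 * Q x := by rw [div_pow, ← hcQ]; field_simp
  · intro h x hx
    calc P x ≤ (δ / ε) ^ 2 * Q x := h x
      _ ≤ (δ / ε) ^ 2 * ε ^ 2 := by gcongr
      _ = δ ^ 2 := by field_simp

theorem exists_nonneg_le_and_forall_le_mul_iff {ι α : Type*} [Semiring α] [Preorder α]
    [MulPosMono α] {p q : ι → α} (hq : ∀ i, 0 ≤ q i) {b : α} (hb : 0 ≤ b) :
    (∃ κ, 0 ≤ κ ∧ κ ≤ b ∧ ∀ i, p i ≤ κ * q i) ↔ ∀ i, p i ≤ b * q i :=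
  ⟨fun ⟨_, _, hκb, h⟩ i => (h i).trans (mul_le_mul_of_nonneg_right hκb (hq i)),
    fun h => ⟨b, hb, le_rfl, h⟩⟩

theorem weighted_norm_bound_iff_matrix_ineq_general
    {s : ℕ} (M A : Matrix (Fin s) (Fin s) ℝ) (hM : M.PosDef)
    (ε γ : ℝ) (hε : 0 < ε) (hγε : γ ≤ ε) :
    (∀ x : Fin s → ℝ, Real.sqrt (x ⬝ᵥ (M *ᵥ x)) ≤ ε →
        Real.sqrt ((A *ᵥ x) ⬝ᵥ (M *ᵥ (A *ᵥ x))) ≤ ε - γ) ↔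
    (∃ κ : ℝ, 0 ≤ κ ∧ κ ≤ (ε - γ) ^ 2 / ε ^ 2 ∧
        (κ • M - Aᵀ * M * A).PosSemidef) := by
  have hscale := QuadraticMap.forall_le_sq_imp_le_sq_iff
    (P := M.toQuadraticForm'.comp (toLin' A)) hM.toQuadraticForm' hε (ε - γ)
  simp only [QuadraticMap.comp_apply, toLin'_apply, toQuadraticForm'_apply] at hscale
  simp only [Real.sqrt_le_left hε.le, Real.sqrt_le_left (sub_nonneg.2 hγε), hscale, div_pow,
    posSemidef_smul_sub_transpose_mul_mul_iff hM.1]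
  exact (exists_nonneg_le_and_forall_le_mul_iff
    (fun x => by simpa using hM.posSemidef.dotProduct_mulVec_nonneg x) (by positivity)).symm

/-- **S-procedure step.** For a symmetric positive definite `M`, `ε > 0`, and
`0 ≤ γ ≤ ε`, one has `‖A x‖_M ≤ ε − γ` for every `x` with `‖x‖_M ≤ ε` if and only if there
exists `κ` with `0 ≤ κ ≤ (ε − γ)²/ε²` such that `Aᵀ M A ⪯ κ M`. -/
theorem weighted_norm_bound_iff_matrix_ineq
    {s : ℕ} (M A : Matrix (Fin s) (Fin s) ℝ) (hM : M.PosDef)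
    (ε γ : ℝ) (hε : 0 < ε) (hγ : 0 ≤ γ) (hγε : γ ≤ ε) :
    (∀ x : Fin s → ℝ, Real.sqrt (x ⬝ᵥ (M *ᵥ x)) ≤ ε →
        Real.sqrt ((A *ᵥ x) ⬝ᵥ (M *ᵥ (A *ᵥ x))) ≤ ε - γ) ↔
    (∃ κ : ℝ, 0 ≤ κ ∧ κ ≤ (ε - γ) ^ 2 / ε ^ 2 ∧
        (κ • M - Aᵀ * M * A).PosSemidef) :=
  weighted_norm_bound_iff_matrix_ineq_general M A hM ε γ hε hγε
end

section
/- Let X̂ and Q be finite nonempty sets, F ⊆ Q, and δ ∈ [0,1]. For each n ∈ ℕ let p_n : X̂ × Q → (X̂ → ℝ) satisfy p_n(x̂,q)(x̂') ≥ 0 and Σ_{x̂'∈X̂} p_n(x̂,q)(x̂') = 1, and let S assign to each pair (q, x̂') ∈ Q × X̂ a nonempty subset S(q,x̂') ⊆ Q. Define V̄_n, V_n : X̂ × Q → ℝ by: V̄_0(x̂,q) = 1_F(q); V̄_{n+1}(x̂,q) = 1 if q ∈ F, and otherwise V̄_{n+1}(x̂,q) = (1−δ)·Σ_{x̂'∈X̂}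 (min_{q'∈S(q,x̂')} V̄_n(x̂',q'))·p_n(x̂,q)(x̂'); V_0 ≡ 0; V_{n+1}(x̂,q) = L( Σ_{x̂'∈X̂} (min_{q'∈S(q,x̂')} max(1_F(q'), V_n(x̂',q')))·p_n(x̂,q)(x̂') − δ ), where L(t) := min(1, max(0,t)). Then V_n(x̂,q) ≤ V̄_n(x̂,q) for all n ∈ ℕ, x̂ ∈ X̂, q ∈ Q. -/
/-- The paper's Bellman recursion `V̄_n` (equation (41)-style comparison, paper's operator):
`V̄_0(x̂,q) = 1_F(q)`; `V̄_{n+1}(x̂,q) = 1` if `q ∈ F`, and otherwise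
`V̄_{n+1}(x̂,q) = (1−δ) Σ_{x̂'} (min_{q' ∈ S(q,x̂')} V̄_n(x̂',q')) p_n(x̂,q)(x̂')`. -/
noncomputable def Vbar {X Q : Type*} [Fintype X] [DecidableEq Q]
    (F : Finset Q) (δ : ℝ) (p : ℕ → X → Q → X → ℝ) (S : Q → X → Finset Q)
    (hS : ∀ (q : Q) (x' : X), (S q x').Nonempty) : ℕ → X → Q → ℝ
  | 0 => fun _ q => if q ∈ F then 1 else 0
  | n + 1 => fun x q =>
      if q ∈ F then 1
      else (1 - δ) *
        ∑ x' : X, ((S q x').inf' (hS q x') fun q' => Vbar F δ p S hS n x' q') * p n x q x'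

/-- The recursion `V_n` of Haesaert et al. with truncation `L(t) = min(1, max(0, t))`:
`V_0 ≡ 0`;
`V_{n+1}(x̂,q) = L(Σ_{x̂'} (min_{q' ∈ S(q,x̂')} max(1_F(q'), V_n(x̂',q'))) p_n(x̂,q)(x̂') − δ)`. -/
noncomputable def Vlow {X Q : Type*} [Fintype X] [DecidableEq Q]
    (F : Finset Q) (δ : ℝ) (p : ℕ → X → Q → X → ℝ) (S : Q → X → Finset Q)
    (hS : ∀ (q : Q) (x' : X), (S q x').Nonempty) : ℕ → X → Q → ℝ
  | 0 => fun _ _ => 0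
  | n + 1 => fun x q =>
      min 1 (max 0
        ((∑ x' : X, ((S q x').inf' (hS q x') fun q' =>
            max (if q' ∈ F then (1 : ℝ) else 0) (Vlow F δ p S hS n x' q')) * p n x q x') - δ))

/-- **Lemma on comparison of Bellman operators.** For every `n`, `x̂`, `q`,
`V_n(x̂,q) ≤ V̄_n(x̂,q)`. -/
theorem Vlow_le_Vbar
    {X Q : Type*} [Fintype X] [Fintype Q] [Nonempty X] [Nonempty Q] [DecidableEq Q]
    (F : Finset Q) (δ : ℝ) (hδ0 : 0 ≤ δ) (hδ1 : δ ≤ 1)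
    (p : ℕ → X → Q → X → ℝ) (S : Q → X → Finset Q)
    (hS : ∀ (q : Q) (x' : X), (S q x').Nonempty)
    (hp0 : ∀ (n : ℕ) (x : X) (q : Q) (x' : X), 0 ≤ p n x q x')
    (hp1 : ∀ (n : ℕ) (x : X) (q : Q), ∑ x' : X, p n x q x' = 1) :
    ∀ (n : ℕ) (x : X) (q : Q), Vlow F δ p S hS n x q ≤ Vbar F δ p S hS n x q := by

  have hbar : ∀ n (x : X) (q : Q), 0 ≤ Vbar F δ p S hS n x q ∧ Vbar F δ p S hS n x q ≤ 1 := by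
    intro n
    induction n with
    | zero => intro x q; simp only [Vbar]; split <;> norm_num
    | succ n ih =>
      intro x q
      simp only [Vbar]
      split
      · norm_num
      · have hM : ∀ x' : X,
            0 ≤ (S q x').inf' (hS q x') (fun q' => Vbar F δ p S hS n x' q') ∧
            (S q x').inf' (hS q x') (fun q' => Vbar F δ p S hS n x' q') ≤ 1 := by
          intro x'
          constructor
          · exact Finset.le_inf' _ _ fun q' _ => (ih x' q').1
          · obtain ⟨q0, hq0⟩ := hS q x'
            exact le_trans (Finset.inf'_le _ hq0) (ih x' q0).2
        have hsum0 : 0 ≤ ∑ x' : X,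
            (S q x').inf' (hS q x') (fun q' => Vbar F δ p S hS n x' q') * p n x q x' :=
          Finset.sum_nonneg fun x' _ => mul_nonneg (hM x').1 (hp0 n x q x')
        have hsum1 : ∑ x' : X,
            (S q x').inf' (hS q x') (fun q' => Vbar F δ p S hS n x' q') * p n x q x' ≤ 1 := by
          calc _ ≤ ∑ x' : X, p n x q x' :=
                Finset.sum_le_sum fun x' _ => by
                  nlinarith [(hM x').2, hp0 n x q x', (hM x').1]
            _ = 1 := hp1 n x q
        constructor
        · exact mul_nonneg (by linarith) hsum0
        · nlinarith
  have key : ∀ n (x : X) (q : Q),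
      max (if q ∈ F then (1:ℝ) else 0) (Vlow F δ p S hS n x q) ≤ Vbar F δ p S hS n x q := by
    intro n
    induction n with
    | zero =>
      intro x q
      simp only [Vlow, Vbar]
      split <;> norm_num
    | succ n ih =>
      intro x q
      simp only [Vlow, Vbar]
      by_cases hqF : q ∈ F
      · simp only [hqF, if_true]
        exact max_le le_rfl (min_le_left _ _)
      · simp only [hqF, if_false, max_le_iff]
        set M : X → ℝ := fun x' =>
          (S q x').inf' (hS q x') (fun q' => Vbar F δ p S hS n x' q') with hMdef
        set m : X → ℝ := fun x' =>
          (S q x').inf' (hS q x') (fun q' =>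
            max (if q' ∈ F then (1:ℝ) else 0) (Vlow F δ p S hS n x' q')) with hmdef
        have hM01 : ∀ x' : X, 0 ≤ M x' ∧ M x' ≤ 1 := by
          intro x'
          constructor
          · exact Finset.le_inf' _ _ fun q' _ => (hbar n x' q').1
          · obtain ⟨q0, hq0⟩ := hS q x'
            exact le_trans (Finset.inf'_le _ hq0) (hbar n x' q0).2
        have hmM : ∀ x' : X, m x' ≤ M x' :=
          fun x' => Finset.le_inf' _ _ fun q' hq' =>
            le_trans (Finset.inf'_le _ hq') (ih x' q')
        have hsum0 : 0 ≤ ∑ x' : X, M x' * p n x q x' :=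
          Finset.sum_nonneg fun x' _ => mul_nonneg (hM01 x').1 (hp0 n x q x')
        have hsum1 : ∑ x' : X, M x' * p n x q x' ≤ 1 := by
          calc _ ≤ ∑ x' : X, p n x q x' :=
                Finset.sum_le_sum fun x' _ => by
                  nlinarith [(hM01 x').2, hp0 n x q x', (hM01 x').1]
            _ = 1 := hp1 n x q
        have hsum_mM : ∑ x' : X, m x' * p n x q x' ≤ ∑ x' : X, M x' * p n x q x' :=
          Finset.sum_le_sum fun x' _ => mul_le_mul_of_nonneg_right (hmM x') (hp0 n x q x')
        have hRHS0 : 0 ≤ (1 - δ) * ∑ x' : X, M x' * p n x q x' :=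
          mul_nonneg (by linarith) hsum0
        constructor
        · exact hRHS0
        · have h1 : max 0 ((∑ x' : X, m x' * p n x q x') - δ) ≤
              (1 - δ) * ∑ x' : X, M x' * p n x q x' := by
            apply max_le hRHS0
            nlinarith
          exact le_trans (min_le_right _ _) h1
  intro n x q
  exact le_trans (le_max_right _ _) (key n x q)
end

section
/- Let X̂ and Q be finite nonempty sets, F ⊆ Q, and δ ∈ [0,1]. For each n ∈ ℕ let p_n : X̂ × Q → (X̂ → ℝ) satisfy p_n(x̂,q)(x̂') ≥ 0 and Σ_{x̂'∈X̂} p_n(x̂,q)(x̂') = 1, and let S assign to each pair (q, x̂') ∈ Q × X̂ a nonempty subset S(q,x̂') ⊆ Q. Define V̄_n, V_n : X̂ × Q → ℝ by: V̄_0(x̂,q) = 1_F(q); V̄_{n+1}(x̂,q) = 1 if q ∈ F, and otherwise V̄_{n+1}(x̂,q) = (1−δ)·Σ_{x̂'∈X̂} (min_{q'∈S(q,x̂')} V̄_n(x̂',q'))·p_n(x̂,q)(x̂'); V_0 ≡ 0; V_{n+1}(x̂,q) = L( Σ_{x̂'∈X̂} (min_{q'∈S(q,x̂')} max(1_F(q'),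 V_n(x̂',q')))·p_n(x̂,q)(x̂') − δ ), where L(t) := min(1, max(0,t)). Then for every horizon H ∈ ℕ, every x̂₀ ∈ X̂, q₀ ∈ Q, and every q̄₀ ∈ S(q₀, x̂₀): V̄_H(x̂₀, q̄₀) ≥ min_{q'∈S(q₀,x̂₀)} max(1_F(q'), V_H(x̂₀, q')). -/
/-- **Lemma, comparison of guarantees.** For every horizon `H`, initial
abstract state `x̂₀`, DFA state `q₀`, and every `q̄₀ ∈ S(q₀, x̂₀)`:
`V̄_H(x̂₀, q̄₀) ≥ min_{q' ∈ S(q₀,x̂₀)} max(1_F(q'), V_H(x̂₀, q'))`, i.e. the paper's guarantee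
dominates the guarantee of Haesaert et al. -/
theorem haesaert_guarantee_le_Vbar
    {X Q : Type*} [Fintype X] [Fintype Q] [Nonempty X] [Nonempty Q] [DecidableEq Q]
    (F : Finset Q) (δ : ℝ) (hδ0 : 0 ≤ δ) (hδ1 : δ ≤ 1)
    (p : ℕ → X → Q → X → ℝ) (S : Q → X → Finset Q)
    (hS : ∀ (q : Q) (x' : X), (S q x').Nonempty)
    (hp0 : ∀ (n : ℕ) (x : X) (q : Q) (x' : X), 0 ≤ p n x q x')
    (hp1 : ∀ (n : ℕ) (x : X) (q : Q), ∑ x' : X, p n x q x' = 1) :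
    ∀ (H : ℕ) (x0 : X) (q0 : Q), ∀ qb0 ∈ S q0 x0,
      (S q0 x0).inf' (hS q0 x0)
          (fun q' => max (if q' ∈ F then (1 : ℝ) else 0) (Vlow F δ p S hS H x0 q')) ≤
        Vbar F δ p S hS H x0 qb0 := by
  have hbounds : ∀ (n : ℕ) (x : X) (q : Q),
      0 ≤ Vbar F δ p S hS n x q ∧ Vbar F δ p S hS n x q ≤ 1 := by
    intro n
    induction n with
    | zero => intro x q; simp only [Vbar]; split <;> norm_num
    | succ n ih =>
      intro x q
      simp only [Vbar]
      split
      · norm_num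
      · have hsum0 : 0 ≤ ∑ x' : X,
            ((S q x').inf' (hS q x') fun q' => Vbar F δ p S hS n x' q') * p n x q x' := by
          apply Finset.sum_nonneg
          intro x' _
          exact mul_nonneg (Finset.le_inf' _ _ fun q' _ => (ih x' q').1) (hp0 n x q x')
        have hsum1 : (∑ x' : X,
            ((S q x').inf' (hS q x') fun q' => Vbar F δ p S hS n x' q') * p n x q x') ≤ 1 := by
          calc (∑ x' : X,
              ((S q x').inf' (hS q x') fun q' => Vbar F δ p S hS n x' q') * p n x q x')
              ≤ ∑ x' : X, 1 * p n x q x' := by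
                apply Finset.sum_le_sum
                intro x' _
                apply mul_le_mul_of_nonneg_right _ (hp0 n x q x')
                obtain ⟨q', hq'⟩ := hS q x'
                exact Finset.inf'_le_of_le _ hq' (ih x' q').2
            _ = 1 := by simp [hp1 n x q]
        constructor
        · exact mul_nonneg (by linarith) hsum0
        · nlinarith
  have key : ∀ (H : ℕ) (x : X) (q : Q),
      max (if q ∈ F then (1 : ℝ) else 0) (Vlow F δ p S hS H x q) ≤ Vbar F δ p S hS H x q := by
    intro H
    induction H with
    | zero => intro x q; simp only [Vbar, Vlow]; split <;> norm_num
    | succ n ih =>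
      intro x q
      simp only [Vbar, Vlow]
      split
      · exact max_le le_rfl (min_le_left _ _)
      · set A := ∑ x' : X, ((S q x').inf' (hS q x') fun q' =>
            max (if q' ∈ F then (1 : ℝ) else 0) (Vlow F δ p S hS n x' q')) * p n x q x' with hA
        set B := ∑ x' : X,
            ((S q x').inf' (hS q x') fun q' => Vbar F δ p S hS n x' q') * p n x q x' with hB
        have hAB : A ≤ B := by
          apply Finset.sum_le_sum
          intro x' _
          apply mul_le_mul_of_nonneg_right _ (hp0 n x q x')
          apply Finset.le_inf'
          intro q' hq'
          exact Finset.inf'_le_of_le _ hq' (ih x' q')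
        have hB0 : 0 ≤ B := by
          apply Finset.sum_nonneg
          intro x' _
          exact mul_nonneg (Finset.le_inf' _ _ fun q' _ => (hbounds n x' q').1) (hp0 n x q x')
        have hB1 : B ≤ 1 := by
          calc B ≤ ∑ x' : X, 1 * p n x q x' := by
                apply Finset.sum_le_sum
                intro x' _
                apply mul_le_mul_of_nonneg_right _ (hp0 n x q x')
                obtain ⟨q', hq'⟩ := hS q x'
                exact Finset.inf'_le_of_le _ hq' (hbounds n x' q').2
            _ = 1 := by simp [hp1 n x q]
        have h1 : A - δ ≤ (1 - δ) * B := by nlinarith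
        have h2 : (0 : ℝ) ≤ (1 - δ) * B := mul_nonneg (by linarith) hB0
        refine max_le h2 ?_
        exact le_trans (min_le_right _ _) (max_le h2 h1)
  intro H x0 q0 qb0 hqb0
  exact le_trans (Finset.inf'_le _ hqb0) (key H x0 qb0)
end
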